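/- arXiv:1612.02518 — 2 statements merged into one kernel-verified Lean document; each statement's English description precedes it below -/
import Mathlib

section
/- Let k₁, k₂, k₃ ∈ ℂ. For every B ∈ SL(2,ℂ) there exist A₁, A₂, A₃ ∈ SL(2,ℂ) with tr(A₁) = k₁, tr(A₂) = k₂, tr(A₃) = k₃, and A₁·A₂·A₃ = B. -/
/-!
Choose `A₃` of trace `k₃` among the matrices `!![k₃, b; -b⁻¹, 0]` so that `A₃ ≠ ±B`; then
`C = B A₃⁻¹ ∈ SL₂` is not scalar, and it remains to write `C = X Y` with traces `k₁, k₂`.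
Take `Y = X⁻¹ C`: since `X⁻¹ = tr X - X` on `SL₂`, the condition `tr Y = k₂` reads
`tr (X C) = k₁ tr C - k₂`. For non-scalar `C` the conditions `tr X = k₁` and `tr (X C) = m` are
independent linear conditions on `X`, and their solution plane meets `det X = 1` at the cost of
solving at most a quadratic equation.
-/

open Matrix Polynomial

variable {K : Type*} [Field K] [IsAlgClosed K]

theorem IsAlgClosed.exists_mul_sub_eq_one (k : K) : ∃ x : K, x * (k - x) = 1 := by
  obtain ⟨x, hx⟩ := IsAlgClosed.exists_root (X ^ 2 - C k * X + 1 : K[X]) (by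
    rw [show (X ^ 2 - C k * X + 1 : K[X]).degree = 2 by compute_degree!]; decide)
  exact ⟨x, by
    simp only [IsRoot.def, eval_add, eval_sub, eval_pow, eval_X, eval_mul, eval_C, eval_one] at hx
    linear_combination -hx⟩

namespace Matrix

theorem exists_det_eq_one_trace_eq_trace_mul_eq {C : Matrix (Fin 2) (Fin 2) K}
    (hC : ∀ a : K, C ≠ a • 1) (k m : K) :
    ∃ X : Matrix (Fin 2) (Fin 2) K, X.det = 1 ∧ X.trace = k ∧ (X * C).trace = m := by
  suffices ∃ x y z : K, x * (k - x) - y * z = 1 ∧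
      x * C 0 0 + y * C 1 0 + z * C 0 1 + (k - x) * C 1 1 = m by
    obtain ⟨x, y, z, hdet, htr⟩ := this
    refine ⟨!![x, y; z, k - x], ?_, ?_, ?_⟩
    · rw [det_fin_two_of, hdet]
    · rw [trace_fin_two_of, add_sub_cancel]
    · rw [← htr, eta_fin_two C, mul_fin_two, trace_fin_two_of]
      simp only [of_apply, cons_val', cons_val_zero, cons_val_one, empty_val', cons_val_fin_one]
      ring
  rcases ne_or_eq (C 1 0) 0 with h10 | h10
  · obtain ⟨x, hx⟩ := IsAlgClosed.exists_mul_sub_eq_one k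
    exact ⟨x, (m - x * C 0 0 - (k - x) * C 1 1) / C 1 0, 0, by simpa using hx,
      by field_simp; ring⟩
  rcases ne_or_eq (C 0 1) 0 with h01 | h01
  · obtain ⟨x, hx⟩ := IsAlgClosed.exists_mul_sub_eq_one k
    exact ⟨x, 0, (m - x * C 0 0 - (k - x) * C 1 1) / C 0 1, by simpa using hx,
      by field_simp; ring⟩
  have hdiag : C 0 0 - C 1 1 ≠ 0 := by
    refine sub_ne_zero.mpr fun h => hC (C 1 1) ?_
    ext i j
    fin_cases i <;> fin_cases j <;> simp [h, h10, h01]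
  obtain ⟨x, hx⟩ : ∃ x, x * (C 0 0 - C 1 1) = m - k * C 1 1 := ⟨_, div_mul_cancel₀ _ hdiag⟩
  exact ⟨x, 1, x * (k - x) - 1, by ring, by rw [h10, h01]; linear_combination hx⟩

theorem exists_mul_eq_of_det_eq_one {C : Matrix (Fin 2) (Fin 2) K} (hdet : C.det = 1)
    (hC : ∀ a : K, C ≠ a • 1) (k₁ k₂ : K) :
    ∃ X Y : Matrix (Fin 2) (Fin 2) K,
      X.det = 1 ∧ Y.det = 1 ∧ X.trace = k₁ ∧ Y.trace = k₂ ∧ X * Y = C := by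
  obtain ⟨X, hXdet, hXtr, hXC⟩ :=
    exists_det_eq_one_trace_eq_trace_mul_eq hC k₁ (k₁ * C.trace - k₂)
  refine ⟨X, X.adjugate * C, hXdet, ?_, hXtr, ?_, ?_⟩
  · rw [det_mul, det_adjugate, hXdet, hdet, one_pow, one_mul]
  · simp only [trace_fin_two, adjugate_fin_two, mul_apply, Fin.sum_univ_two, of_apply, cons_val',
      cons_val_zero, cons_val_one, empty_val', cons_val_fin_one] at hXtr hXC ⊢
    linear_combination C 0 0 * hXtr + C 1 1 * hXtr - hXC
  · rw [← mul_assoc, mul_adjugate, hXdet, one_smul, one_mul]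

theorem exists_det_eq_one_trace_eq_forall_ne_smul {B : Matrix (Fin 2) (Fin 2) K}
    (hB : B.det = 1) (k : K) :
    ∃ A : Matrix (Fin 2) (Fin 2) K, A.det = 1 ∧ A.trace = k ∧ ∀ a : K, B ≠ a • A := by
  classical
  obtain ⟨b, hb⟩ := Infinite.exists_notMem_finset ({0, B 0 1, -B 0 1} : Finset K)
  simp only [Finset.mem_insert, Finset.mem_singleton, not_or] at hb
  obtain ⟨hb0, hbB, hbB'⟩ := hb
  have hdet : (!![k, b; -b⁻¹, 0] : Matrix (Fin 2) (Fin 2) K).det = 1 := by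
    rw [det_fin_two_of]; field_simp; ring
  refine ⟨!![k, b; -b⁻¹, 0], hdet, by rw [trace_fin_two_of, add_zero], fun a hBA => ?_⟩
  have ha : a ^ 2 = 1 := by
    rw [← hB, hBA, det_smul, hdet, Fintype.card_fin, mul_one]
  have hB01 : B 0 1 = a * b := by
    rw [hBA]; simp
  have hsq : b ^ 2 = B 0 1 ^ 2 := by
    rw [hB01]; linear_combination -(b ^ 2 * ha)
  rcases sq_eq_sq_iff_eq_or_eq_neg.mp hsq with h | h
  exacts [hbB h, hbB' h]

end Matrix

/-- For any `k₁, k₂, k₃ ∈ ℂ` and any `B ∈ SL(2,ℂ)`, there are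
`A₁, A₂, A₃ ∈ SL(2,ℂ)` with `tr Aᵢ = kᵢ` and `A₁A₂A₃ = B`. -/
theorem product_three_with_traces (k₁ k₂ k₃ : ℂ) (B : Matrix (Fin 2) (Fin 2) ℂ)
    (hB : B.det = 1) :
    ∃ A₁ A₂ A₃ : Matrix (Fin 2) (Fin 2) ℂ,
      A₁.det = 1 ∧ A₂.det = 1 ∧ A₃.det = 1 ∧
      A₁.trace = k₁ ∧ A₂.trace = k₂ ∧ A₃.trace = k₃ ∧ A₁ * A₂ * A₃ = B := by
  obtain ⟨A₃, hA₃det, hA₃tr, hA₃⟩ := exists_det_eq_one_trace_eq_forall_ne_smul hB k₃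
  have hB_eq : B * A₃.adjugate * A₃ = B := by
    rw [mul_assoc, adjugate_mul, hA₃det, one_smul, mul_one]
  have hdet : (B * A₃.adjugate).det = 1 := by
    rw [det_mul, det_adjugate, hB, hA₃det, one_pow, one_mul]
  have hnonscalar : ∀ a : ℂ, B * A₃.adjugate ≠ a • 1 := fun a h =>
    hA₃ a (by rw [← hB_eq, h, smul_mul_assoc, one_mul])
  obtain ⟨A₁, A₂, hA₁det, hA₂det, hA₁tr, hA₂tr, hA₁₂⟩ :=
    exists_mul_eq_of_det_eq_one hdet hnonscalar k₁ k₂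
  exact ⟨A₁, A₂, A₃, hA₁det, hA₂det, hA₃det, hA₁tr, hA₂tr, hA₃tr, by rw [hA₁₂, hB_eq]⟩
end

section
/- Let A be a nonscalar 2×2 complex matrix (i.e., A is not a scalar multiple of the identity). Then the set { V : V is a 2×2 complex matrix with tr(V) = 0 and tr(V·A*) = 0 } is equal to the set { U·A − A·U : U is a 2×2 complex matrix with tr(U) = 0 }. -/
/-!
Since `A* = tr A • 1 - A` for `2 × 2` matrices, a traceless `V` satisfies `tr (V A*) = 0` iff
`tr (V A) = 0`. By the polarized Cayley–Hamilton identity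
`X Y + Y X = tr X • Y + tr Y • X + (tr (X Y) - tr X tr Y) • 1`, such a `V` satisfies
`A V = tr A • V - V A`, and then `[V M, A] = tr (M A) • V` for every traceless `M`. As `A` is
nonscalar, some traceless `M` has `tr (M A) = 1`, and `V M` minus its scalar part is a traceless
`U` with `[U, A] = V`. Conversely, `tr ([U, A] A*) = det A • tr U - tr (U A* A) = 0`.
-/

open Matrix

namespace Matrix

section CommRing

variable {R : Type*} [CommRing R]

theorem trace_commutator_mul_adjugate {n : Type*} [Fintype n] [DecidableEq n]
    (U A : Matrix n n R) : ((U * A - A * U) * A.adjugate).trace = 0 := by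
  rw [sub_mul, trace_sub, mul_assoc, mul_adjugate, mul_assoc, trace_mul_comm A, mul_assoc,
    adjugate_mul, sub_self]

theorem adjugate_fin_two_eq_trace_smul_one_sub (A : Matrix (Fin 2) (Fin 2) R) :
    A.adjugate = A.trace • 1 - A := by
  ext i j
  fin_cases i <;> fin_cases j <;> simp [adjugate_fin_two, trace_fin_two]

theorem trace_mul_adjugate_fin_two_of_trace_eq_zero {V : Matrix (Fin 2) (Fin 2) R}
    (hV : V.trace = 0) (A : Matrix (Fin 2) (Fin 2) R) :
    (V * A.adjugate).trace = -(V * A).trace := by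
  rw [adjugate_fin_two_eq_trace_smul_one_sub, mul_sub, trace_sub, mul_smul_comm, mul_one,
    trace_smul, hV, smul_zero, zero_sub]

theorem mul_add_mul_fin_two (X Y : Matrix (Fin 2) (Fin 2) R) :
    X * Y + Y * X = X.trace • Y + Y.trace • X + ((X * Y).trace - X.trace * Y.trace) • 1 := by
  ext i j
  fin_cases i <;> fin_cases j <;> simp [mul_apply, trace_fin_two, Fin.sum_univ_two] <;> ring

theorem commutator_mul_eq_trace_mul_smul {V M A : Matrix (Fin 2) (Fin 2) R}
    (hV : V.trace = 0) (hM : M.trace = 0) (hVA : (V * A).trace = 0) :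
    V * M * A - A * (V * M) = (M * A).trace • V := by
  have hAV : A * V = A.trace • V - V * A := by
    rw [eq_sub_iff_add_eq, add_comm, mul_add_mul_fin_two, hV, hVA]
    simp
  have hMA : M * A + A * M = A.trace • M + (M * A).trace • 1 := by
    rw [mul_add_mul_fin_two, hM]
    simp
  calc V * M * A - A * (V * M)
      = V * (M * A + A * M) - A.trace • (V * M) := by
        rw [← mul_assoc A, hAV]
        simp only [sub_mul, smul_mul_assoc, mul_add, mul_assoc]
        abel
    _ = (M * A).trace • V := by
        rw [hMA]
        simp [mul_add]

end CommRing

variable {K : Type*} [Field K]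

theorem exists_trace_eq_zero_trace_mul_eq_one {n : Type*} [Fintype n] [DecidableEq n]
    {A : Matrix n n K} (hA : ∀ c : K, A ≠ c • 1) :
    ∃ M : Matrix n n K, M.trace = 0 ∧ (M * A).trace = 1 := by
  suffices ∃ M : Matrix n n K, M.trace = 0 ∧ (M * A).trace ≠ 0 by
    obtain ⟨M, hM, hMA⟩ := this
    exact ⟨(M * A).trace⁻¹ • M, by simp [hM], by simp [hMA]⟩
  by_contra! h
  cases isEmpty_or_nonempty n with
  | inl _ => exact hA 0 (Subsingleton.elim _ _)
  | inr hn =>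
    obtain ⟨k⟩ := hn
    apply hA (A k k)
    ext i j
    by_cases hij : i = j
    · subst hij
      have := h (single i i 1 - single k k 1) (by simp [trace_sub])
      simpa [sub_mul, trace_sub, trace_single_mul, sub_eq_zero] using this
    · have := h (single j i 1) (by simp [Ne.symm hij])
      simpa [trace_single_mul, hij] using this

theorem exists_trace_eq_zero_commutator_eq [NeZero (2 : K)] {A V : Matrix (Fin 2) (Fin 2) K}
    (hA : ∀ c : K, A ≠ c • 1) (hV : V.trace = 0) (hVA : (V * A).trace = 0) :
    ∃ U : Matrix (Fin 2) (Fin 2) K, U.trace = 0 ∧ V = U * A - A * U := by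
  obtain ⟨M, hM, hMA⟩ := exists_trace_eq_zero_trace_mul_eq_one hA
  refine ⟨V * M - ((V * M).trace / 2) • 1, ?_, ?_⟩
  · simp [trace_sub, div_mul_cancel₀ _ (NeZero.ne (2 : K))]
  · simp [sub_mul, mul_sub, commutator_mul_eq_trace_mul_smul hV hM hVA, hMA]

end Matrix

/-- For a nonscalar 2×2 complex matrix `A`, the set of traceless matrices `V` with
`tr (V·A*) = 0` equals the set of brackets `U·A − A·U` with `U` traceless. -/
theorem tangent_space_eq_brackets (A : Matrix (Fin 2) (Fin 2) ℂ)
    (hA : ∀ c : ℂ, A ≠ c • (1 : Matrix (Fin 2) (Fin 2) ℂ)) :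
    {V : Matrix (Fin 2) (Fin 2) ℂ | V.trace = 0 ∧ (V * A.adjugate).trace = 0} =
      {W : Matrix (Fin 2) (Fin 2) ℂ |
        ∃ U : Matrix (Fin 2) (Fin 2) ℂ, U.trace = 0 ∧ W = U * A - A * U} := by
  ext V
  constructor
  · rintro ⟨hV, hVA⟩
    rw [trace_mul_adjugate_fin_two_of_trace_eq_zero hV, neg_eq_zero] at hVA
    exact exists_trace_eq_zero_commutator_eq hA hV hVA
  · rintro ⟨U, -, rfl⟩
    exact ⟨by rw [trace_sub, trace_mul_comm, sub_self], trace_commutator_mul_adjugate U A⟩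
end
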